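/- arXiv:2410.17240 — 2 statements merged into one kernel-verified Lean document; each statement's English description precedes it below -/
import Mathlib

section
/- Let f : ℕ → ℕ be defined by f(4) = 0, f(n) = f(n/2) when n ≡ 0 (mod 4) and n > 4, and f(n) = 1 + f(n+2) when n ≡ 2 (mod 4). Then for all even n ≥ 4, f(n) ≤ log₂(n). -/
theorem stmt_0 (f : ℕ → ℕ)
    (hf4 : f 4 = 0)
    (hf0 : ∀ n, 4 < n → n % 4 = 0 → f n = f (n / 2))
    (hf2 : ∀ n, n % 4 = 2 → f n = 1 + f (n + 2)) :
    ∀ n, 4 ≤ n → Even n → (f n : ℝ) ≤ Real.logb 2 n := by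
  -- key natural-number lemma
  have key : ∀ n, 6 ≤ n → Even n → f n ≤ Nat.log 2 (n - 2) := by
    intro n
    induction n using Nat.strong_induction_on with
    | _ n ih =>
      intro hn he
      have h2 : n % 2 = 0 := Nat.even_iff.mp he
      rcases Nat.lt_or_ge n 7 with h7 | h7
      · -- n = 6
        have hn6 : n = 6 := by omega
        subst hn6
        have h8 : f 6 = 1 + f 8 := hf2 6 (by norm_num)
        have h84 : f 8 = f 4 := hf0 8 (by norm_num) (by norm_num)
        have : f 6 = 1 := by omega
        rw [this]
        have : Nat.log 2 4 = 2 := by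
          rw [show (4:ℕ) = 2^2 by norm_num, Nat.log_pow (by norm_num)]
        simp [this]
      · rcases Nat.lt_or_ge (n % 4) 2 with h4 | h4
        · -- n % 4 = 0, n ≥ 8
          have h40 : n % 4 = 0 := by omega
          have heq : f n = f (n / 2) := hf0 n (by omega) h40
          rcases Nat.lt_or_ge n 9 with h9 | h9
          · -- n = 8
            have hn8 : n = 8 := by omega
            subst hn8
            have : f 8 = f 4 := hf0 8 (by norm_num) (by norm_num)
            rw [heq]
            simp [show (8:ℕ)/2 = 4 from rfl, hf4]
          · -- n ≥ 12
            have hge : 6 ≤ n / 2 := by omega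
            have hev : Even (n / 2) := by
              refine Nat.even_iff.mpr ?_; omega
            have hlt : n / 2 < n := by omega
            have := ih (n / 2) hlt hge hev
            rw [heq]
            calc f (n/2) ≤ Nat.log 2 (n/2 - 2) := this
              _ ≤ Nat.log 2 (n - 2) := Nat.log_mono_right (by omega)
        · -- n % 4 = 2
          have h42 : n % 4 = 2 := by omega
          have heq : f n = 1 + f (n + 2) := hf2 n h42
          have heq2 : f (n + 2) = f ((n + 2) / 2) := hf0 (n+2) (by omega) (by omega)
          set m := (n + 2) / 2 with hm
          have hm6 : 6 ≤ m := by omega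
          have hmev : Even m := by refine Nat.even_iff.mpr ?_; omega
          have hmlt : m < n := by omega
          have ihm := ih m hmlt hm6 hmev
          have hsplit : Nat.log 2 (n - 2) = Nat.log 2 (m - 2) + 1 := by
            have h1 : n - 2 = (m - 2) * 2 := by omega
            rw [h1, Nat.log_mul_base (by norm_num) (by omega)]
          rw [heq, heq2, hsplit]
          omega
  intro n hn he
  rcases Nat.lt_or_ge n 6 with h6 | h6
  · -- n = 4 (n=5 excluded by evenness)
    have hn4 : n = 4 := by
      have := Nat.even_iff.mp he; omega
    subst hn4
    rw [hf4]
    push_cast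
    exact Real.logb_nonneg (by norm_num) (by norm_num)
  · have h1 : f n ≤ Nat.log 2 (n - 2) := key n h6 he
    have h2 : Nat.log 2 (n - 2) ≤ Nat.log 2 n := Nat.log_mono_right (by omega)
    have h3 : (Nat.log 2 n : ℝ) ≤ Real.logb 2 n := by
      have hp : (2:ℝ) ^ Nat.log 2 n ≤ (n : ℝ) := by
        exact_mod_cast Nat.pow_log_le_self 2 (by omega)
      have := Real.logb_le_logb_of_le (by norm_num : (1:ℝ) < 2) (by positivity) hp
      rwa [Real.logb_pow, Real.logb_self_eq_one (by norm_num), mul_one] at this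
    calc (f n : ℝ) ≤ (Nat.log 2 (n-2) : ℝ) := by exact_mod_cast h1
      _ ≤ (Nat.log 2 n : ℝ) := by exact_mod_cast h2
      _ ≤ Real.logb 2 n := h3
end

section
/- Let g : ℕ → ℕ be defined by g(4) = 2, g(n) = n + 2·g(n/2) when n ≡ 0 (mod 4) and n > 4, and g(n) = g(n+2) when n ≡ 2 (mod 4). Then for all even n ≥ 4, g(n) ≤ 2·n·log₂(n). -/
private lemma lb_pow (k : ℕ) : Real.logb 2 ((2:ℝ)^k) = k := by
  rw [Real.logb_pow, Real.logb_self_eq_one (by norm_num)]; ring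

private lemma lb_ge (k : ℕ) (x : ℝ) (hx : (2:ℝ)^k ≤ x) : (k:ℝ) ≤ Real.logb 2 x := by
  calc (k:ℝ) = Real.logb 2 ((2:ℝ)^k) := (lb_pow k).symm
    _ ≤ Real.logb 2 x := Real.logb_le_logb_of_le (by norm_num) (by positivity) hx

private lemma aux_analytic (x : ℝ) (hx : 22 ≤ x) :
    2*(x+2) * Real.logb 2 (x+2) - 2*(x+2) ≤ 2*x*Real.logb 2 x - x := by
  have hx0 : (0:ℝ) < x := by linarith
  have hl2 : (0.6931471803:ℝ) < Real.log 2 := Real.log_two_gt_d9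
  have hl2' : Real.log 2 < 0.6931471808 := Real.log_two_lt_d9
  have hL2 : (0:ℝ) < Real.log 2 := by linarith
  -- log(x+2) ≤ log x + 2/x
  have h1 : Real.log (x+2) ≤ Real.log x + 2/x := by
    have e : Real.log ((x+2)/x) = Real.log (x+2) - Real.log x :=
      Real.log_div (by linarith) (by linarith)
    have h2 := Real.log_le_sub_one_of_pos (show (0:ℝ) < (x+2)/x by positivity)
    have e2 : (x+2)/x - 1 = 2/x := by field_simp; ring
    linarith [e ▸ h2, e2]
  -- log x ≤ x/32 - 1 + 5 log 2
  have h2 : Real.log x ≤ x/32 - 1 + 5 * Real.log 2 := by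
    have e : Real.log (x/32) = Real.log x - Real.log 32 :=
      Real.log_div (by linarith) (by norm_num)
    have e32 : Real.log 32 = 5 * Real.log 2 := by
      rw [show (32:ℝ) = 2^(5:ℕ) by norm_num, Real.log_pow]; push_cast; ring
    have h3 := Real.log_le_sub_one_of_pos (show (0:ℝ) < x/32 by positivity)
    rw [e, e32] at h3; linarith
  -- key inequality in terms of log
  have key : 2*(x+2)*Real.log (x+2) ≤ 2*x*Real.log x + (x+4)*Real.log 2 := by
    have h1' : 2*(x+2)*Real.log (x+2) ≤ 2*(x+2)*(Real.log x + 2/x) := by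
      apply mul_le_mul_of_nonneg_left h1 (by linarith)
    have e : 2*(x+2)*(Real.log x + 2/x) = 2*x*Real.log x + 4*Real.log x + 4 + 8/x := by
      field_simp; ring
    have hinvx : 8/x ≤ 8/22 := by
      rw [div_le_div_iff₀ hx0 (by norm_num)]; linarith
    have hprod : 22*(Real.log 2 - 1/8) ≤ x*(Real.log 2 - 1/8) :=
      mul_le_mul_of_nonneg_right hx (by linarith)
    nlinarith [h2]
  -- convert to logb
  have expand : 2*(x+2) * Real.logb 2 (x+2) - 2*(x+2) - (2*x*Real.logb 2 x - x)
      = (2*(x+2)*Real.log (x+2) - (2*x*Real.log x + (x+4)*Real.log 2))/Real.log 2 := by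
    unfold Real.logb; field_simp; ring
  have : (2*(x+2)*Real.log (x+2) - (2*x*Real.log x + (x+4)*Real.log 2))/Real.log 2 ≤ 0 :=
    div_nonpos_of_nonpos_of_nonneg (by linarith) (le_of_lt hL2)
  linarith [expand ▸ this]

private lemma main_aux (g : ℕ → ℕ)
    (hg4 : g 4 = 2)
    (hg0 : ∀ n, 4 < n → n % 4 = 0 → g n = n + 2 * g (n / 2))
    (hg2 : ∀ n, n % 4 = 2 → g n = g (n + 2)) :
    ∀ n, 4 ≤ n → Even n → (g n : ℝ) ≤ 2 * n * Real.logb 2 n - n := by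
  intro n
  induction n using Nat.strong_induction_on with
  | _ n ih =>
  intro hn he
  have h2 : n % 2 = 0 := Nat.even_iff.mp he
  rcases (show n % 4 = 0 ∨ n % 4 = 2 by omega) with h4 | h4
  · -- n ≡ 0 mod 4
    rcases (show n = 4 ∨ 8 ≤ n by omega) with rfl | h8
    · rw [hg4]
      have : Real.logb 2 ((4:ℕ):ℝ) = 2 := by
        rw [show ((4:ℕ):ℝ) = 2^(2:ℕ) by norm_num, lb_pow]; norm_num
      rw [this]; norm_num
    · set m := n / 2 with hm
      have hnm : n = 2 * m := by omega
      have hmeven : Even m := by refine Nat.even_iff.mpr ?_; omega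
      have hm4 : 4 ≤ m := by omega
      have hmn : m < n := by omega
      have ihm := ih m hmn hm4 hmeven
      have hrec := hg0 n (by omega) h4
      have hcast : (n:ℝ) = 2 * m := by exact_mod_cast congrArg Nat.cast hnm
      have hlog : Real.logb 2 (n:ℝ) = 1 + Real.logb 2 (m:ℝ) := by
        rw [hcast, Real.logb_mul (by norm_num) (by positivity),
          Real.logb_self_eq_one (by norm_num)]
      rw [hrec]
      push_cast
      rw [hlog, hcast]
      have hm0 : (0:ℝ) ≤ (m:ℝ) := by positivity
      nlinarith [ihm]
  · -- n ≡ 2 mod 4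
    rcases (show n = 6 ∨ n = 10 ∨ n = 14 ∨ n = 18 ∨ 22 ≤ n by omega) with rfl | h
    · -- n = 6 : g 6 = 12
      have hg8 : g 8 = 12 := by rw [hg0 8 (by norm_num) (by norm_num)]; simp [hg4]
      have hv : g 6 = 12 := by rw [hg2 6 (by norm_num)]; exact hg8
      rw [hv]
      have := lb_ge 2 ((6:ℕ):ℝ) (by norm_num)
      push_cast at this ⊢
      nlinarith
    rcases h with rfl | h
    · -- n = 10 : g 10 = 36
      have hg8 : g 8 = 12 := by rw [hg0 8 (by norm_num) (by norm_num)]; simp [hg4]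
      have hg6 : g 6 = 12 := by rw [hg2 6 (by norm_num)]; exact hg8
      have hv : g 10 = 36 := by
        rw [hg2 10 (by norm_num), hg0 12 (by norm_num) (by norm_num)]
        norm_num [hg6]
      rw [hv]
      have := lb_ge 3 ((10:ℕ):ℝ) (by norm_num)
      push_cast at this ⊢
      nlinarith
    rcases h with rfl | h
    · -- n = 14 : g 14 = 40
      have hg8 : g 8 = 12 := by rw [hg0 8 (by norm_num) (by norm_num)]; simp [hg4]
      have hv : g 14 = 40 := by
        rw [hg2 14 (by norm_num), hg0 16 (by norm_num) (by norm_num)]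
        norm_num [hg8]
      rw [hv]
      have := lb_ge 3 ((14:ℕ):ℝ) (by norm_num)
      push_cast at this ⊢
      nlinarith
    rcases h with rfl | h22
    · -- n = 18 : g 18 = 92
      have hg8 : g 8 = 12 := by rw [hg0 8 (by norm_num) (by norm_num)]; simp [hg4]
      have hg6 : g 6 = 12 := by rw [hg2 6 (by norm_num)]; exact hg8
      have hg12 : g 12 = 36 := by
        rw [hg0 12 (by norm_num) (by norm_num)]; norm_num [hg6]
      have hg10 : g 10 = 36 := by rw [hg2 10 (by norm_num)]; exact hg12
      have hv : g 18 = 92 := by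
        rw [hg2 18 (by norm_num), hg0 20 (by norm_num) (by norm_num)]
        norm_num [hg10]
      rw [hv]
      have := lb_ge 4 ((18:ℕ):ℝ) (by norm_num)
      push_cast at this ⊢
      nlinarith
    · -- n ≥ 22, n ≡ 2 mod 4
      set m := (n + 2) / 2 with hm
      have hnm : n + 2 = 2 * m := by omega
      have hmeven : Even m := by refine Nat.even_iff.mpr ?_; omega
      have hm4 : 4 ≤ m := by omega
      have hmn : m < n := by omega
      have ihm := ih m hmn hm4 hmeven
      have hrec : g n = (n + 2) + 2 * g m := by
        rw [hg2 n h4, hg0 (n+2) (by omega) (by omega)]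
      have hcast : ((n:ℝ) + 2) = 2 * m := by exact_mod_cast congrArg Nat.cast hnm
      have hlog : Real.logb 2 ((n:ℝ) + 2) = 1 + Real.logb 2 (m:ℝ) := by
        rw [hcast, Real.logb_mul (by norm_num) (by positivity),
          Real.logb_self_eq_one (by norm_num)]
      have step : (g n : ℝ) ≤ 2*((n:ℝ)+2) * Real.logb 2 ((n:ℝ)+2) - 2*((n:ℝ)+2) := by
        rw [hrec]; push_cast
        rw [hlog]
        nlinarith [ihm, hcast]
      have := aux_analytic (n:ℝ) (by exact_mod_cast Nat.cast_le.mpr h22)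
      linarith

theorem stmt_2 (g : ℕ → ℕ)
    (hg4 : g 4 = 2)
    (hg0 : ∀ n, 4 < n → n % 4 = 0 → g n = n + 2 * g (n / 2))
    (hg2 : ∀ n, n % 4 = 2 → g n = g (n + 2)) :
    ∀ n, 4 ≤ n → Even n → (g n : ℝ) ≤ 2 * n * Real.logb 2 n := by
  intro n hn he
  have h := main_aux g hg4 hg0 hg2 n hn he
  have : (0:ℝ) ≤ n := by positivity
  linarith
end
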